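/- Let E be a normed space, 1 ≤ p ≤ q < ∞, and assume the composition operator C_f generated by f : E → E maps BV_p([a,b],E) into BV_q([a,b],E). Then C_f is locally bounded if and only if f is Hölder continuous on bounded subsets of E with exponent p/q. -/

import Mathlib

open scoped ENNReal NNReal

noncomputable def pVar {E : Type*} [NormedAddCommGroup E] (p a b : ℝ) (x : ℝ → E) : ℝ≥0∞ :=
  ⨆ (n : ℕ) (t : Fin (n + 1) → ℝ) (_ : StrictMono t) (_ : t 0 = a)
    (_ : t (Fin.last n) = b),
    ∑ i : Fin n, (‖x (t i.succ) - x (t i.castSucc)‖₊ : ℝ≥0∞) ^ p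

/-!
If `f` is `L`-Hölder of exponent `p/q` on the ball of radius `r` and `‖x‖_p ≤ r`, then `x` takes
its values in that ball, so every term of a `q`-variation sum of `f ∘ x` is at most `L^q` times
the corresponding term of the `p`-variation sum of `x`.

Conversely, test local boundedness on the zigzag that jumps `2n` times between `w` and `u` at
equally spaced points: its `p`-variation is exactly `2n‖u - w‖^p` and that of its image is
`2n‖f u - f w‖^q`. Taking `n ≈ R^p / ‖u - w‖^p` keeps the zigzags for `u, w` in `K ⊆ ball 0 R` in
a fixed ball of `BV_p`, and the resulting bound `(2n)^{1/q} ‖f u - f w‖ ≤ M` is the Hölder estimate.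
-/

open Set Metric

theorem sum_ite_mem_le_card_mul {ι α : Type*} [Fintype ι] [DecidableEq α] {φ : ι → α}
    (hφ : Function.Injective φ) (S : Finset α) (D : ℝ≥0∞) :
    ∑ i, (if φ i ∈ S then D else 0) ≤ S.card * D := by
  rw [← Finset.sum_filter, Finset.sum_const, nsmul_eq_mul]
  gcongr
  exact Finset.card_le_card_of_injOn φ (fun i hi => (Finset.mem_filter.1 hi).2) hφ.injOn

theorem exists_nat_mul_le_lt_two_mul {e A : ℝ} (he : 0 < e) (heA : e ≤ A) :
    ∃ n : ℕ, n * e ≤ A ∧ A < 2 * n * e := by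
  have h1 : 1 ≤ A / e := (one_le_div he).2 heA
  refine ⟨⌊A / e⌋₊, (le_div_iff₀ he).1 (Nat.floor_le (by linarith)), ?_⟩
  have h2 : A / e < ⌊A / e⌋₊ + 1 := Nat.lt_floor_add_one _
  have h3 : (1 : ℝ) ≤ ⌊A / e⌋₊ := by exact_mod_cast Nat.one_le_floor_iff _ |>.2 h1
  rw [div_lt_iff₀ he] at h2
  nlinarith

section PVariation

variable {E : Type*} [NormedAddCommGroup E] {p q a b : ℝ}

theorem sum_le_pVar (x : ℝ → E) {n : ℕ} {t : Fin (n + 1) → ℝ} (ht : StrictMono t)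
    (h0 : t 0 = a) (hn : t (Fin.last n) = b) :
    ∑ i : Fin n, ‖x (t i.succ) - x (t i.castSucc)‖ₑ ^ p ≤ pVar p a b x :=
  le_iSup_of_le n <| le_iSup_of_le t <| le_iSup_of_le ht <| le_iSup_of_le h0 <|
    le_iSup_of_le hn le_rfl

theorem pVar_le {x : ℝ → E} {C : ℝ≥0∞}
    (h : ∀ (n : ℕ) (t : Fin (n + 1) → ℝ), StrictMono t → t 0 = a → t (Fin.last n) = b →
      ∑ i : Fin n, ‖x (t i.succ) - x (t i.castSucc)‖ₑ ^ p ≤ C) :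
    pVar p a b x ≤ C := by
  simp only [pVar, iSup_le_iff]
  exact h

theorem pVar_const (hp : 0 < p) (c : E) : pVar p a b (fun _ => c) = 0 :=
  nonpos_iff_eq_zero.1 <| pVar_le fun _ _ _ _ _ => by simp [ENNReal.zero_rpow_of_pos hp]

theorem enorm_sub_rpow_le_pVar (hp : 0 < p) (x : ℝ → E) {s : ℝ} (hs : s ∈ Icc a b) :
    ‖x s - x a‖ₑ ^ p ≤ pVar p a b x := by
  rcases hs.1.eq_or_lt with rfl | has
  · simp [ENNReal.zero_rpow_of_pos hp]
  rcases hs.2.eq_or_lt with rfl | hsb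
  · simpa using sum_le_pVar (p := p) x (t := ![a, s])
      (Fin.strictMono_iff_lt_succ.2 fun i => by fin_cases i; simpa) rfl rfl
  · refine le_trans ?_ (sum_le_pVar (p := p) x (t := ![a, s, b])
      (Fin.strictMono_iff_lt_succ.2 fun i => by fin_cases i <;> simpa) rfl rfl)
    simp [Fin.sum_univ_succ]

theorem norm_sub_le_pVar_toReal_rpow (hp : 0 < p) {x : ℝ → E} (hx : pVar p a b x ≠ ⊤)
    {s : ℝ} (hs : s ∈ Icc a b) : ‖x s - x a‖ ≤ (pVar p a b x).toReal ^ (1 / p) := by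
  have h := ENNReal.toReal_mono hx (enorm_sub_rpow_le_pVar hp x hs)
  rw [← ENNReal.toReal_rpow, toReal_enorm] at h
  calc ‖x s - x a‖ = (‖x s - x a‖ ^ p) ^ p⁻¹ := (Real.rpow_rpow_inv (norm_nonneg _) hp.ne').symm
    _ ≤ _ := by rw [one_div]; gcongr

theorem pVar_le_mul_pVar {x y : ℝ → E} {C : ℝ≥0∞}
    (h : ∀ s ∈ Icc a b, ∀ t ∈ Icc a b, ‖y s - y t‖ₑ ^ q ≤ C * ‖x s - x t‖ₑ ^ p) :
    pVar q a b y ≤ C * pVar p a b x := by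
  refine pVar_le fun n t ht h0 hn => ?_
  have hmem (i : Fin (n + 1)) : t i ∈ Icc a b :=
    ⟨h0 ▸ ht.monotone (Fin.zero_le i), hn ▸ ht.monotone (Fin.le_last i)⟩
  calc ∑ i : Fin n, ‖y (t i.succ) - y (t i.castSucc)‖ₑ ^ q
      ≤ ∑ i : Fin n, C * ‖x (t i.succ) - x (t i.castSucc)‖ₑ ^ p :=
        Finset.sum_le_sum fun i _ => h _ (hmem _) _ (hmem _)
    _ = C * ∑ i : Fin n, ‖x (t i.succ) - x (t i.castSucc)‖ₑ ^ p := (Finset.mul_sum ..).symm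
    _ ≤ C * pVar p a b x := by gcongr; exact sum_le_pVar x ht h0 hn

theorem enorm_rpow_eq_ofReal (v : E) (hp : 0 ≤ p) : ‖v‖ₑ ^ p = ENNReal.ofReal (‖v‖ ^ p) := by
  rw [← ofReal_norm, ENNReal.ofReal_rpow_of_nonneg (norm_nonneg v) hp]

theorem pVar_toReal_rpow_le_of_holder (hp : 0 < p) (hq : 0 < q) {x y : ℝ → E} {L : ℝ}
    (hL : 0 ≤ L) (hx : pVar p a b x ≠ ⊤)
    (h : ∀ s ∈ Icc a b, ∀ t ∈ Icc a b, ‖y s - y t‖ ≤ L * ‖x s - x t‖ ^ (p / q)) :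
    (pVar q a b y).toReal ^ (1 / q) ≤ L * (pVar p a b x).toReal ^ (1 / q) := by
  have hpt : ∀ s ∈ Icc a b, ∀ t ∈ Icc a b,
      ‖y s - y t‖ₑ ^ q ≤ ENNReal.ofReal (L ^ q) * ‖x s - x t‖ₑ ^ p := by
    intro s hs t ht
    rw [enorm_rpow_eq_ofReal _ hq.le, enorm_rpow_eq_ofReal _ hp.le,
      ← ENNReal.ofReal_mul (by positivity)]
    refine ENNReal.ofReal_le_ofReal ?_
    calc ‖y s - y t‖ ^ q ≤ (L * ‖x s - x t‖ ^ (p / q)) ^ q := by gcongr; exact h s hs t ht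
      _ = L ^ q * ‖x s - x t‖ ^ p := by
        rw [Real.mul_rpow hL (by positivity), ← Real.rpow_mul (norm_nonneg _),
          div_mul_cancel₀ _ hq.ne']
  have hvar := ENNReal.toReal_mono (ENNReal.mul_ne_top ENNReal.ofReal_ne_top hx)
    (pVar_le_mul_pVar hpt)
  rw [ENNReal.toReal_mul, ENNReal.toReal_ofReal (by positivity)] at hvar
  calc (pVar q a b y).toReal ^ (1 / q) ≤ (L ^ q * (pVar p a b x).toReal) ^ (1 / q) := by
        gcongr
    _ = L * (pVar p a b x).toReal ^ (1 / q) := by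
        rw [Real.mul_rpow (by positivity) ENNReal.toReal_nonneg, one_div,
          Real.rpow_rpow_inv hL hq.ne']


noncomputable def bvNorm (p a b : ℝ) (x : ℝ → E) : ℝ :=
  ‖x a‖ + (pVar p a b x).toReal ^ (1 / p)

def CompLocallyBounded (p q a b : ℝ) (f : E → E) : Prop :=
  ∀ r : ℝ, 0 < r → ∃ M : ℝ, ∀ x : ℝ → E, pVar p a b x ≠ ⊤ → bvNorm p a b x ≤ r →
    bvNorm q a b (f ∘ x) ≤ M

def HolderOnBounded (f : E → E) (α : ℝ) : Prop :=
  ∀ K : Set E, Bornology.IsBounded K → ∃ L : ℝ, 0 ≤ L ∧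
    ∀ u ∈ K, ∀ w ∈ K, ‖f u - f w‖ ≤ L * ‖u - w‖ ^ α

theorem bvNorm_const (hp : 0 < p) (c : E) : bvNorm p a b (fun _ => c) = ‖c‖ := by
  simp [bvNorm, pVar_const hp, hp.ne']

theorem norm_le_bvNorm (hp : 0 < p) {x : ℝ → E} (hx : pVar p a b x ≠ ⊤) {s : ℝ}
    (hs : s ∈ Icc a b) : ‖x s‖ ≤ bvNorm p a b x :=
  calc ‖x s‖ ≤ ‖x a‖ + ‖x s - x a‖ := norm_le_norm_add_norm_sub' _ _
    _ ≤ bvNorm p a b x := add_le_add_right (norm_sub_le_pVar_toReal_rpow hp hx hs) _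

theorem compLocallyBounded_of_holderOnBounded (hp : 0 < p) (hq : 0 < q) {f : E → E}
    (hf : HolderOnBounded f (p / q)) : CompLocallyBounded p q a b f := by
  intro r hr
  obtain ⟨L, hL, hLf⟩ := hf (closedBall 0 r) isBounded_closedBall
  refine ⟨‖f 0‖ + 2 * L * r ^ (p / q), fun x hx hxr => ?_⟩
  have hV : (pVar p a b x).toReal ^ (1 / p) ≤ r := by
    unfold bvNorm at hxr; linarith [norm_nonneg (x a)]
  have hxa : ‖x a‖ ≤ r := (le_add_of_nonneg_right (by positivity)).trans hxr
  have hmem : ∀ s ∈ Icc a b, x s ∈ closedBall 0 r := fun s hs =>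
    mem_closedBall_zero_iff.2 ((norm_le_bvNorm hp hx hs).trans hxr)
  have hfa : ‖f (x a)‖ ≤ ‖f 0‖ + L * r ^ (p / q) :=
    calc ‖f (x a)‖ ≤ ‖f 0‖ + ‖f (x a) - f 0‖ := norm_le_norm_add_norm_sub' _ _
      _ ≤ ‖f 0‖ + L * ‖x a - 0‖ ^ (p / q) := by
        gcongr; exact hLf _ (mem_closedBall_zero_iff.2 hxa) _ (mem_closedBall_self hr.le)
      _ ≤ ‖f 0‖ + L * r ^ (p / q) := by rw [sub_zero]; gcongr
  have hfV : (pVar q a b (f ∘ x)).toReal ^ (1 / q) ≤ L * r ^ (p / q) :=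
    calc (pVar q a b (f ∘ x)).toReal ^ (1 / q) ≤ L * (pVar p a b x).toReal ^ (1 / q) :=
          pVar_toReal_rpow_le_of_holder hp hq hL hx fun s hs t ht =>
            hLf _ (hmem s hs) _ (hmem t ht)
      _ = L * ((pVar p a b x).toReal ^ (1 / p)) ^ (p / q) := by
          rw [← Real.rpow_mul ENNReal.toReal_nonneg]; field_simp
      _ ≤ L * r ^ (p / q) := by gcongr
  unfold bvNorm
  rw [Function.comp_apply]
  linarith



theorem pVar_ite_mem_le (hp : 0 < p) (S : Finset ℝ) (u w : E) :
    pVar p a b (fun s => if s ∈ S then u else w) ≤ 2 * S.card * ‖u - w‖ₑ ^ p := by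
  refine pVar_le fun n t ht _ _ => ?_
  set D := ‖u - w‖ₑ ^ p
  have hterm (s s' : ℝ) : ‖(if s ∈ S then u else w) - (if s' ∈ S then u else w)‖ₑ ^ p ≤
      (if s ∈ S then D else 0) + (if s' ∈ S then D else 0) := by
    by_cases hs : s ∈ S <;> by_cases hs' : s' ∈ S <;>
      simp [hs, hs', D, ENNReal.zero_rpow_of_pos hp, enorm_sub_rev]
  calc _ ≤ ∑ i : Fin n, ((if t i.succ ∈ S then D else 0) + (if t i.castSucc ∈ S then D else 0)) :=
        Finset.sum_le_sum fun i _ => hterm _ _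
    _ ≤ S.card * D + S.card * D := by
        rw [Finset.sum_add_distrib]
        gcongr
        · exact sum_ite_mem_le_card_mul (ht.injective.comp (Fin.succ_injective n)) S D
        · exact sum_ite_mem_le_card_mul (ht.injective.comp (Fin.castSucc_injective n)) S D
    _ = 2 * S.card * D := by ring

noncomputable def gridPoint (a b : ℝ) (n k : ℕ) : ℝ := a + k * ((b - a) / (2 * n))

noncomputable def oddGridPoints (a b : ℝ) (n : ℕ) : Finset ℝ :=
  (Finset.range n).image fun j => gridPoint a b n (2 * j + 1)

noncomputable def zigzag {α : Type*} (a b : ℝ) (n : ℕ) (u w : α) (s : ℝ) : α :=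
  if s ∈ oddGridPoints a b n then u else w

theorem gridPoint_strictMono {n : ℕ} (hab : a < b) (hn : 0 < n) : StrictMono (gridPoint a b n) := by
  have hδ : 0 < (b - a) / (2 * n) := div_pos (sub_pos.2 hab) (by positivity)
  intro k l hkl
  simp only [gridPoint]
  gcongr

theorem gridPoint_two_mul {n : ℕ} (hn : n ≠ 0) : gridPoint a b n (2 * n) = b := by
  simp only [gridPoint]
  push_cast
  field_simp
  ring

theorem gridPoint_mem_oddGridPoints_iff {n k : ℕ} (hab : a < b) :
    gridPoint a b n k ∈ oddGridPoints a b n ↔ ∃ j < n, k = 2 * j + 1 := by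
  rcases Nat.eq_zero_or_pos n with rfl | hn
  · simp [oddGridPoints]
  simp only [oddGridPoints, Finset.mem_image, Finset.mem_range,
    (gridPoint_strictMono hab hn).injective.eq_iff, eq_comm]

theorem zigzag_apply_left {α : Type*} (hab : a < b) (n : ℕ) (u w : α) :
    zigzag a b n u w a = w := by
  have h := gridPoint_mem_oddGridPoints_iff hab (n := n) (k := 0)
  simp only [gridPoint, Nat.cast_zero, zero_mul, add_zero] at h
  simp [zigzag, h]

theorem comp_zigzag {α β : Type*} (f : α → β) (n : ℕ) (u w : α) :
    f ∘ zigzag a b n u w = zigzag a b n (f u) (f w) :=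
  funext fun _ => apply_ite f _ _ _

theorem le_pVar_zigzag (hab : a < b) (n : ℕ) (u w : E) :
    2 * n * ‖u - w‖ₑ ^ p ≤ pVar p a b (zigzag a b n u w) := by
  rcases Nat.eq_zero_or_pos n with rfl | hn
  · simp
  have hmem (k : ℕ) := gridPoint_mem_oddGridPoints_iff hab (n := n) (k := k)
  have hterm (i : Fin (2 * n)) : ‖zigzag a b n u w (gridPoint a b n (i + 1)) -
      zigzag a b n u w (gridPoint a b n i)‖ₑ = ‖u - w‖ₑ := by
    obtain ⟨i, hi⟩ := i
    simp only [zigzag, hmem]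
    rcases Nat.even_or_odd' i with ⟨j, rfl | rfl⟩
    · rw [if_pos ⟨j, by omega, rfl⟩, if_neg (by omega)]
    · rw [if_neg (by omega), if_pos ⟨j, by omega, rfl⟩, enorm_sub_rev]
  have hsum := sum_le_pVar (p := p) (a := a) (b := b) (zigzag a b n u w)
    (t := fun i : Fin (2 * n + 1) => gridPoint a b n i)
    ((gridPoint_strictMono hab hn).comp Fin.val_strictMono)
    (by simp [gridPoint]) (gridPoint_two_mul hn.ne')
  simp only [Fin.val_succ, Fin.val_castSucc, hterm, Finset.sum_const, Finset.card_univ,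
    Fintype.card_fin, nsmul_eq_mul] at hsum
  exact_mod_cast hsum

theorem pVar_zigzag (hp : 0 < p) (hab : a < b) (n : ℕ) (u w : E) :
    pVar p a b (zigzag a b n u w) = 2 * n * ‖u - w‖ₑ ^ p := by
  refine le_antisymm ((pVar_ite_mem_le hp _ u w).trans ?_) (le_pVar_zigzag hab n u w)
  gcongr
  exact Finset.card_image_le.trans (Finset.card_range n).le

theorem bvNorm_zigzag (hp : 0 < p) (hab : a < b) (n : ℕ) (u w : E) :
    bvNorm p a b (zigzag a b n u w) = ‖w‖ + (2 * n) ^ (1 / p) * ‖u - w‖ := by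
  rw [bvNorm, zigzag_apply_left hab, pVar_zigzag hp hab, ENNReal.toReal_mul,
    ← ENNReal.toReal_rpow, toReal_enorm, Real.mul_rpow (by positivity) (by positivity), one_div,
    Real.rpow_rpow_inv (norm_nonneg _) hp.ne']
  norm_cast


theorem norm_sub_mul_rpow_le_of_zigzag (hp : 0 < p) (hq : 0 < q) (hab : a < b) {f : E → E}
    {u w : E} (huw : u ≠ w) {A M : ℝ} (hA : ‖u - w‖ ^ p ≤ A)
    (hM : ∀ x : ℝ → E, pVar p a b x ≠ ⊤ → bvNorm p a b x ≤ ‖w‖ + (2 * A) ^ (1 / p) →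
      bvNorm q a b (f ∘ x) ≤ M) :
    ‖f u - f w‖ * A ^ (1 / q) ≤ M * ‖u - w‖ ^ (p / q) := by
  set d := ‖u - w‖
  have hd : 0 < d := norm_pos_iff.2 (sub_ne_zero.2 huw)
  obtain ⟨n, hnA, hAn⟩ := exists_nat_mul_le_lt_two_mul (Real.rpow_pos_of_pos hd p) hA
  have hroot {r : ℝ} (hr : 0 < r) :
      (2 * n * d ^ p) ^ (1 / r) = (2 * n) ^ (1 / r) * d ^ (p / r) := by
    rw [Real.mul_rpow (by positivity) (by positivity), ← Real.rpow_mul hd.le, mul_one_div]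
  have hbv := hM (zigzag a b n u w) (by rw [pVar_zigzag hp hab]; finiteness) <| by
    rw [bvNorm_zigzag hp hab]
    gcongr
    calc (2 * n : ℝ) ^ (1 / p) * d = (2 * n * d ^ p) ^ (1 / p) := by
          rw [hroot hp, div_self hp.ne', Real.rpow_one]
      _ ≤ (2 * A) ^ (1 / p) := by gcongr ?_ ^ _; linarith
  rw [comp_zigzag, bvNorm_zigzag hq hab] at hbv
  calc ‖f u - f w‖ * A ^ (1 / q) ≤ ‖f u - f w‖ * (2 * n * d ^ p) ^ (1 / q) := by
        gcongr
        exact (Real.rpow_nonneg hd.le p).trans hA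
    _ = (2 * n) ^ (1 / q) * ‖f u - f w‖ * d ^ (p / q) := by rw [hroot hq]; ring
    _ ≤ M * d ^ (p / q) := by gcongr; linarith [norm_nonneg (f w)]

theorem holderOnBounded_of_compLocallyBounded (hp : 0 < p) (hq : 0 < q) (hab : a < b)
    {f : E → E} (hf : CompLocallyBounded p q a b f) : HolderOnBounded f (p / q) := by
  intro K hK
  obtain ⟨R, hR, hKR⟩ := hK.subset_closedBall_lt 0 0
  set A := (2 * R) ^ p
  obtain ⟨M, hM⟩ := hf (R + (2 * A) ^ (1 / p)) (by positivity)
  have hM0 : 0 ≤ M := by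
    have h0 := hM (fun _ => 0) (by simp [pVar_const hp])
      (by rw [bvNorm_const hp]; simp; positivity)
    exact (norm_nonneg (f 0)).trans (by rwa [Function.comp_def, bvNorm_const hq] at h0)
  refine ⟨M / A ^ (1 / q), by positivity, fun u hu w hw => ?_⟩
  rcases eq_or_ne u w with rfl | huw
  · simp [Real.zero_rpow (div_pos hp hq).ne']
  replace hu := mem_closedBall_zero_iff.1 (hKR hu)
  replace hw := mem_closedBall_zero_iff.1 (hKR hw)
  rw [div_mul_eq_mul_div, le_div_iff₀ (by positivity)]
  refine norm_sub_mul_rpow_le_of_zigzag hp hq hab huw ?_ fun x hx hxR => hM x hx ?_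
  · exact Real.rpow_le_rpow (norm_nonneg _) (by linarith [norm_sub_le u w]) hp.le
  · linarith

end PVariation

theorem comp_locally_bounded_iff_holder_on_bounded_general {E : Type*} [NormedAddCommGroup E]
    (p q a b : ℝ) (hp : 1 ≤ p) (hpq : p ≤ q) (hab : a < b)
    (f : E → E) :
    (∀ r : ℝ, 0 < r → ∃ M : ℝ, ∀ x : ℝ → E, pVar p a b x ≠ ⊤ →
        ‖x a‖ + (pVar p a b x).toReal ^ (1 / p) ≤ r →
        ‖f (x a)‖ + (pVar q a b (fun t => f (x t))).toReal ^ (1 / q) ≤ M) ↔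
      (∀ K : Set E, Bornology.IsBounded K → ∃ L : ℝ, 0 ≤ L ∧
        ∀ u ∈ K, ∀ w ∈ K, ‖f u - f w‖ ≤ L * ‖u - w‖ ^ (p / q)) := by
  have hp0 : 0 < p := by linarith
  have hq0 : 0 < q := by linarith
  exact ⟨holderOnBounded_of_compLocallyBounded hp0 hq0 hab,
    compLocallyBounded_of_holderOnBounded hp0 hq0⟩

/-- Assume the composition operator `C_f` maps `BV_p([a,b],E)` into `BV_q([a,b],E)`.
Then `C_f` is locally bounded if and only if `f` is Hölder continuous with exponent
`p/q` on every bounded subset of `E`. -/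
theorem comp_locally_bounded_iff_holder_on_bounded {E : Type*} [NormedAddCommGroup E]
    (p q a b : ℝ) (hp : 1 ≤ p) (hpq : p ≤ q) (hab : a < b)
    (f : E → E)
    (hf : ∀ x : ℝ → E, pVar p a b x ≠ ⊤ → pVar q a b (fun t => f (x t)) ≠ ⊤) :
    (∀ r : ℝ, 0 < r → ∃ M : ℝ, ∀ x : ℝ → E, pVar p a b x ≠ ⊤ →
        ‖x a‖ + (pVar p a b x).toReal ^ (1 / p) ≤ r →
        ‖f (x a)‖ + (pVar q a b (fun t => f (x t))).toReal ^ (1 / q) ≤ M) ↔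
      (∀ K : Set E, Bornology.IsBounded K → ∃ L : ℝ, 0 ≤ L ∧
        ∀ u ∈ K, ∀ w ∈ K, ‖f u - f w‖ ≤ L * ‖u - w‖ ^ (p / q)) :=
  comp_locally_bounded_iff_holder_on_bounded_general p q a b hp hpq hab f
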